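/- For any positive integer k, there exists a finite simple connected graph G such that min{ |M(G)|/2, sdim(G) } − sdim_f(G) = k. -/

import Mathlib

open SimpleGraph

/-- `Sset G x y` is the set `S{x,y}` of vertices `z` such that `x` lies on some shortest
`y`–`z` path or `y` lies on some shortest `x`–`z` path in `G`. -/
def Sset {V : Type*} (G : SimpleGraph V) (x y : V) : Set V :=
  {z | (∃ p : G.Walk y z, p.length = G.dist y z ∧ x ∈ p.support) ∨
       (∃ p : G.Walk x z, p.length = G.dist x z ∧ y ∈ p.support)}

/-- A strong resolving function of `G`: `g : V → [0,1]` with `g(S{x,y}) ≥ 1` for all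
distinct vertices `x, y`. -/
def IsSRF {V : Type*} (G : SimpleGraph V) (g : V → ℝ) : Prop :=
  (∀ v, 0 ≤ g v ∧ g v ≤ 1) ∧ ∀ x y : V, x ≠ y → 1 ≤ ∑ᶠ z ∈ Sset G x y, g z

/-- The fractional strong metric dimension of `G`. -/
noncomputable def sdimf {V : Type*} (G : SimpleGraph V) : ℝ :=
  sInf {s : ℝ | ∃ g : V → ℝ, IsSRF G g ∧ s = ∑ᶠ v, g v}

/-- A strong resolving set of `G`: every pair of distinct vertices is strongly resolved
by some vertex of `S` (i.e. some vertex of `S` lies in `S{x,y}`). -/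
def IsSRSet {V : Type*} (G : SimpleGraph V) (S : Set V) : Prop :=
  ∀ x y : V, x ≠ y → ∃ z ∈ S, z ∈ Sset G x y

/-- The strong metric dimension of `G`: the minimum cardinality of a strong resolving set. -/
noncomputable def sdim {V : Type*} (G : SimpleGraph V) : ℕ :=
  sInf {n : ℕ | ∃ S : Set V, IsSRSet G S ∧ S.ncard = n}

/-- `u` is maximally distant from `v`: `d(u,v) ≥ d(w,v)` for every neighbor `w` of `u`. -/
def MaxDistFrom {V : Type*} (G : SimpleGraph V) (u v : V) : Prop :=
  ∀ w : V, G.Adj u w → G.dist w v ≤ G.dist u v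

/-- `u` and `v` are mutually maximally distant (MMD) in `G`. -/
def MMD {V : Type*} (G : SimpleGraph V) (u v : V) : Prop :=
  u ≠ v ∧ MaxDistFrom G u v ∧ MaxDistFrom G v u

/-- The strong resolving graph of `G` (on the ambient vertex set): `u ~ v` iff `u` MMD `v`. -/
def SRGraph {V : Type*} (G : SimpleGraph V) : SimpleGraph V where
  Adj := MMD G
  symm := ⟨fun _ _ h => ⟨h.1.symm, h.2.2, h.2.1⟩⟩
  loopless := ⟨fun _ h => h.1 rfl⟩

/-- `M(G)`: the set of vertices that are mutually maximally distant with some vertex. -/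
def Mset {V : Type*} (G : SimpleGraph V) : Set V := {x | ∃ y, MMD G x y}

/-- The matching number of `G`. -/
noncomputable def matchNum {V : Type*} (G : SimpleGraph V) : ℕ :=
  sSup {n : ℕ | ∃ M : G.Subgraph, M.IsMatching ∧ M.edgeSet.ncard = n}

/-- The corona product `G ⊙ H`. -/
def corona {V W : Type*} (G : SimpleGraph V) (H : SimpleGraph W) :
    SimpleGraph (V ⊕ V × W) where
  Adj x y :=
    match x, y with
    | Sum.inl u, Sum.inl u' => G.Adj u u'
    | Sum.inl u, Sum.inr iw => u = iw.1
    | Sum.inr iw, Sum.inl u => iw.1 = u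
    | Sum.inr iw, Sum.inr iw' => iw.1 = iw'.1 ∧ H.Adj iw.2 iw'.2
  symm := by
    constructor
    rintro (u | iw) (u' | iw') h
    · exact G.adj_symm h
    · exact h.symm
    · exact h.symm
    · exact ⟨h.1.symm, H.adj_symm h.2⟩
  loopless := by
    constructor
    rintro (u | iw) h
    · exact G.irrefl h
    · exact H.irrefl h.2

/-- `K₁ ⊙ H`: the graph obtained from `H` by adding one new vertex adjacent to every
vertex of `H`. -/
def cone {W : Type*} (H : SimpleGraph W) : SimpleGraph (Option W) where
  Adj x y :=
    match x, y with
    | none, none => False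
    | none, some _ => True
    | some _, none => True
    | some w, some w' => H.Adj w w'
  symm := by
    constructor
    rintro (_ | w) (_ | w') h
    · exact h
    · exact trivial
    · exact trivial
    · exact H.adj_symm h
  loopless := by
    constructor
    rintro (_ | w) h
    · exact h
    · exact H.irrefl h

/-- The lexicographic product `G[H]`. -/
def lexProd {V W : Type*} (G : SimpleGraph V) (H : SimpleGraph W) :
    SimpleGraph (V × W) where
  Adj x y := G.Adj x.1 y.1 ∨ (x.1 = y.1 ∧ H.Adj x.2 y.2)
  symm := by
    constructor
    rintro x y (h | ⟨h1, h2⟩)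
    · exact Or.inl (G.adj_symm h)
    · exact Or.inr ⟨h1.symm, H.adj_symm h2⟩
  loopless := by
    constructor
    rintro x (h | ⟨_, h2⟩)
    · exact G.irrefl h
    · exact H.irrefl h2

/-- `SL{x,y} = (N[x] ∪ N[y]) ∩ S{x,y}`. -/
def SLset {W : Type*} (H : SimpleGraph W) (x y : W) : Set W :=
  (insert x (H.neighborSet x) ∪ insert y (H.neighborSet y)) ∩ Sset H x y

/-- A strong locating function of `H`. -/
def IsSLF {W : Type*} (H : SimpleGraph W) (f : W → ℝ) : Prop :=
  (∀ v, 0 ≤ f v ∧ f v ≤ 1) ∧ ∀ x y : W, x ≠ y → 1 ≤ ∑ᶠ z ∈ SLset H x y, f z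

/-- `sl_f(H)`: the minimum weight of a strong locating function of `H`. -/
noncomputable def slf {W : Type*} (H : SimpleGraph W) : ℝ :=
  sInf {s : ℝ | ∃ f : W → ℝ, IsSLF H f ∧ s = ∑ᶠ v, f v}

/-- `u` has a true twin: some other vertex with the same closed neighborhood. -/
def HasTrueTwin {V : Type*} (G : SimpleGraph V) (u : V) : Prop :=
  ∃ v : V, v ≠ u ∧ insert v (G.neighborSet v) = insert u (G.neighborSet u)

/-- `u` has a false twin: some other vertex with the same open neighborhood. -/
def HasFalseTwin {V : Type*} (G : SimpleGraph V) (u : V) : Prop :=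
  ∃ v : V, v ≠ u ∧ G.neighborSet v = G.neighborSet u

/-- `m₁(G)`: number of vertices in type-1 (singleton) classes of the twin relation. -/
noncomputable def m1 {V : Type*} (G : SimpleGraph V) : ℕ :=
  {u : V | ¬ HasTrueTwin G u ∧ ¬ HasFalseTwin G u}.ncard

/-- `m₂(G)`: number of vertices in type-2 (clique) classes of the twin relation. -/
noncomputable def m2 {V : Type*} (G : SimpleGraph V) : ℕ :=
  {u : V | HasTrueTwin G u}.ncard

/-- `m₃(G)`: number of vertices in type-3 (independent set) classes of the twin relation. -/
noncomputable def m3 {V : Type*} (G : SimpleGraph V) : ℕ :=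
  {u : V | HasFalseTwin G u}.ncard

/-- The strong resolving graph of `G` (whose vertex set is `M(G)`) is Hamiltonian:
there is a cycle in `SRGraph G` passing through every vertex of `M(G)`. -/
def SRHamiltonian {V : Type*} (G : SimpleGraph V) : Prop :=
  ∃ (u : V) (p : (SRGraph G).Walk u u), p.IsCycle ∧ ∀ v ∈ Mset G, v ∈ p.support

/-!
A connected graph `G` is strongly resolved by `S` (resp. `g`) exactly when `S` (resp. `g`) covers
every mutually maximally distant pair: such a pair `u, v` has `S{u,v} = {u,v}`, and every `S{x,y}`
contains one, namely a pair `u, v` as far apart as possible with `u, x, y, v` in this order on a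
geodesic. For `G = K₁ + Hᶜ`, where `H` has neither isolated vertices nor false twins, the MMD pairs
are exactly the edges of `H`, so `|M(G)| = |V(H)|`, `sdim G = τ(H)` and `sdim_f G = τ_f(H)`.
Let `H` be the clique `K_a` beside `c` disjoint edges `C–S` together with a crown between `C` and
`c` further vertices `P`. Then `|V(H)| = a + 3c`, `τ(H) = a - 1 + c` and `τ_f(H) = a / 2 + c`, and
`a = 2k + 2`, `c = 2k + 3` gives the difference `k`.
-/

lemma finsum_mem_le_finsum_mem_of_subset {α : Type*} [Finite α] {f : α → ℝ} {s t : Set α}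
    (hf : ∀ a, 0 ≤ f a) (hst : s ⊆ t) : ∑ᶠ a ∈ s, f a ≤ ∑ᶠ a ∈ t, f a := by
  rw [← finsum_mem_add_sdiff hst t.toFinite]
  exact le_add_of_nonneg_right (finsum_nonneg fun a => finsum_nonneg fun _ => hf a)

lemma Set.ncard_eq_ncard_preimage_inl_add {α β : Type*} [Finite α] [Finite β]
    (s : Set (α ⊕ β)) : s.ncard = (Sum.inl ⁻¹' s).ncard + (Sum.inr ⁻¹' s).ncard := by
  conv_lhs => rw [← Set.image_preimage_inl_union_image_preimage_inr s]
  rw [Set.ncard_union_eq Set.disjoint_image_inl_image_inr,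
    Set.ncard_image_of_injective _ Sum.inl_injective,
    Set.ncard_image_of_injective _ Sum.inr_injective]

namespace SimpleGraph

variable {V : Type*} {G : SimpleGraph V} {u v w : V}

lemma exists_walk_length_eq_dist_mem_support_iff (hG : G.Connected) :
    (∃ p : G.Walk u w, p.length = G.dist u w ∧ v ∈ p.support) ↔
      G.dist u v + G.dist v w = G.dist u w := by
  classical
  constructor
  · rintro ⟨p, hp, hv⟩
    have hsplit := congrArg Walk.length (p.take_spec hv)
    rw [Walk.length_append] at hsplit
    have := dist_le (p.takeUntil v hv)
    have := dist_le (p.dropUntil v hv)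
    have := hG.dist_triangle (u := u) (v := v) (w := w)
    omega
  · intro h
    obtain ⟨p, hp⟩ := hG.exists_walk_length_eq_dist u v
    obtain ⟨q, hq⟩ := hG.exists_walk_length_eq_dist v w
    have := dist_le (p.append q)
    refine ⟨p.append q, ?_, (Walk.mem_support_append_iff p q).mpr (Or.inl p.end_mem_support)⟩
    rw [Walk.length_append] at this ⊢
    omega

lemma Connected.exists_adj_dist_add_one_eq (hG : G.Connected) (h : u ≠ w) :
    ∃ v, G.Adj u v ∧ G.dist v w + 1 = G.dist u w := by
  obtain ⟨p, hp⟩ := hG.exists_walk_length_eq_dist u w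
  cases p with
  | nil => exact absurd rfl h
  | @cons _ v _ hadj q =>
    refine ⟨v, hadj, ?_⟩
    have := dist_le q
    have := hG.dist_triangle (u := u) (v := v) (w := w)
    rw [dist_eq_one_iff_adj.mpr hadj] at this
    simp only [Walk.length_cons] at hp
    omega

lemma neighborSet_ne_of_adj_of_not_adj (hu : G.Adj u w) (hv : ¬G.Adj v w) :
    G.neighborSet v ≠ G.neighborSet u :=
  fun h => hv (show w ∈ G.neighborSet v from h ▸ hu)

end SimpleGraph

open SimpleGraph

section StrongResolving

variable {V : Type*} {G : SimpleGraph V} {u v x y z : V}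

lemma Sset_comm (x y : V) : Sset G x y = Sset G y x := by
  ext z
  exact or_comm

lemma mem_Sset_iff_dist (hG : G.Connected) :
    z ∈ Sset G x y ↔
      G.dist y x + G.dist x z = G.dist y z ∨ G.dist x y + G.dist y z = G.dist x z := by
  simp only [Sset, Set.mem_ofPred_eq, exists_walk_length_eq_dist_mem_support_iff hG]

lemma left_mem_Sset (hG : G.Connected) (x y : V) : x ∈ Sset G x y :=
  (mem_Sset_iff_dist hG).mpr (Or.inl (by simp))

lemma right_mem_Sset (hG : G.Connected) (x y : V) : y ∈ Sset G x y :=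
  Sset_comm x y ▸ left_mem_Sset hG y x

lemma MaxDistFrom.eq_of_dist_add_dist_eq (hG : G.Connected) (h : MaxDistFrom G u v)
    (hz : G.dist v u + G.dist u z = G.dist v z) : z = u := by
  by_contra hzu
  obtain ⟨w, huw, hw⟩ := hG.exists_adj_dist_add_one_eq (Ne.symm hzu)
  have := h w huw
  have := hG.dist_triangle (u := v) (v := w) (w := z)
  rw [dist_comm (u := w), dist_comm (u := u) (v := v)] at *
  omega

lemma MMD.symm (h : MMD G u v) : MMD G v u := ⟨h.1.symm, h.2.2, h.2.1⟩

lemma MMD.Sset_eq (hG : G.Connected) (h : MMD G u v) : Sset G u v = {u, v} := by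
  refine Set.Subset.antisymm (fun z hz => ?_) ?_
  · rcases (mem_Sset_iff_dist hG).mp hz with hz | hz
    · exact Or.inl (h.2.1.eq_of_dist_add_dist_eq hG hz)
    · exact Or.inr (h.2.2.eq_of_dist_add_dist_eq hG hz)
  · rintro z (rfl | rfl)
    exacts [left_mem_Sset hG _ _, right_mem_Sset hG _ _]

/-- A neighbour of `u` farther from `v` would still have `x` on a shortest path to `v`. -/
lemma maxDistFrom_of_forall_dist_le (hG : G.Connected)
    (hmax : ∀ u', G.dist u' x + G.dist x v = G.dist u' v → G.dist u' v ≤ G.dist u v)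
    (hu : G.dist u x + G.dist x v = G.dist u v) : MaxDistFrom G u v := by
  intro w huw
  by_contra! hfar
  have hwu : G.dist w u = 1 := dist_eq_one_iff_adj.mpr huw.symm
  have := hG.dist_triangle (u := w) (v := u) (w := x)
  have := hG.dist_triangle (u := w) (v := x) (w := v)
  have := hG.dist_triangle (u := w) (v := u) (w := v)
  have := hmax w (by omega)
  omega

lemma exists_MMD_mem_Sset [Finite V] (hG : G.Connected) (hxy : x ≠ y) :
    ∃ u v, MMD G u v ∧ u ∈ Sset G x y ∧ v ∈ Sset G x y := by
  obtain ⟨⟨u, v⟩, hgeo, hmax⟩ := Set.exists_max_image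
    {p : V × V | G.dist p.1 x + G.dist x y + G.dist y p.2 = G.dist p.1 p.2}
    (fun p => G.dist p.1 p.2) (Set.toFinite _) ⟨(x, y), by simp⟩
  simp only [Set.mem_ofPred_eq, Prod.forall] at hgeo hmax
  have hxy_pos := hG.pos_dist_of_ne hxy
  have := hG.dist_triangle (u := u) (v := x) (w := y)
  have := hG.dist_triangle (u := u) (v := y) (w := v)
  have := hG.dist_triangle (u := x) (v := y) (w := v)
  have := hG.dist_triangle (u := u) (v := x) (w := v)
  have hux : G.dist u x = G.dist x u := dist_comm
  have huy : G.dist u y = G.dist y u := dist_comm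
  have hyx : G.dist y x = G.dist x y := dist_comm
  have hvu : G.dist v u = G.dist u v := dist_comm
  have hvy : G.dist v y = G.dist y v := dist_comm
  refine ⟨u, v, ⟨?_, ?_, ?_⟩, (mem_Sset_iff_dist hG).mpr (Or.inl ?_),
    (mem_Sset_iff_dist hG).mpr (Or.inr ?_)⟩
  · rintro rfl
    simp only [dist_self] at hgeo
    omega
  · refine maxDistFrom_of_forall_dist_le hG (x := x) (fun u' hu' => ?_) (by omega)
    have := hG.dist_triangle (u := u') (v := x) (w := y)
    have := hG.dist_triangle (u := u') (v := y) (w := v)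
    exact hmax u' v (by omega)
  · refine maxDistFrom_of_forall_dist_le hG (x := y) (fun v' hv' => ?_) (by omega)
    have := hG.dist_triangle (u := u) (v := y) (w := v')
    have := hG.dist_triangle (u := x) (v := y) (w := v')
    have : G.dist v' y = G.dist y v' := dist_comm
    have : G.dist v' u = G.dist u v' := dist_comm
    have := hmax u v' (by omega)
    omega
  · omega
  · omega

theorem isSRSet_iff_forall_MMD [Finite V] (hG : G.Connected) {S : Set V} :
    IsSRSet G S ↔ ∀ u v, MMD G u v → u ∈ S ∨ v ∈ S := by
  constructor
  · intro hS u v huv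
    obtain ⟨z, hzS, hz⟩ := hS u v huv.1
    rw [huv.Sset_eq hG] at hz
    rcases hz with rfl | rfl
    exacts [Or.inl hzS, Or.inr hzS]
  · intro hS x y hxy
    obtain ⟨u, v, huv, hu, hv⟩ := exists_MMD_mem_Sset hG hxy
    rcases hS u v huv with h | h
    exacts [⟨u, h, hu⟩, ⟨v, h, hv⟩]

theorem isSRF_iff_forall_MMD [Finite V] (hG : G.Connected) {g : V → ℝ} :
    IsSRF G g ↔ (∀ v, 0 ≤ g v ∧ g v ≤ 1) ∧ ∀ u v, MMD G u v → 1 ≤ g u + g v := by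
  refine and_congr_right fun hg => ⟨fun h u v huv => ?_, fun h x y hxy => ?_⟩
  · simpa only [huv.Sset_eq hG, finsum_mem_pair huv.1] using h u v huv.1
  · obtain ⟨u, v, huv, hu, hv⟩ := exists_MMD_mem_Sset hG hxy
    calc 1 ≤ g u + g v := h u v huv
      _ = ∑ᶠ z ∈ ({u, v} : Set V), g z := (finsum_mem_pair huv.1).symm
      _ ≤ ∑ᶠ z ∈ Sset G x y, g z := finsum_mem_le_finsum_mem_of_subset (fun z => (hg z).1)
          (Set.insert_subset hu (Set.singleton_subset_iff.mpr hv))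

namespace SimpleGraph

variable {W : Type*} {G' : SimpleGraph W}

lemma Hom.dist_map_le (f : G →g G') (h : G.Reachable u v) :
    G'.dist (f u) (f v) ≤ G.dist u v := by
  obtain ⟨p, hp⟩ := h.exists_walk_length_eq_dist
  simpa only [Walk.length_map, hp] using dist_le (p.map f)

lemma Iso.dist_eq (e : G ≃g G') (u v : V) : G'.dist (e u) (e v) = G.dist u v := by
  by_cases h : G.Reachable u v
  · refine le_antisymm (Hom.dist_map_le e.toHom h) ?_
    simpa using Hom.dist_map_le e.symm.toHom (Iso.reachable_iff (φ := e) |>.mpr h)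
  · rw [dist_eq_zero_of_not_reachable h,
      dist_eq_zero_of_not_reachable (mt Iso.reachable_iff.mp h)]

lemma Iso.maxDistFrom_iff (e : G ≃g G') : MaxDistFrom G' (e u) (e v) ↔ MaxDistFrom G u v := by
  rw [MaxDistFrom, ← e.toEquiv.forall_congr_right]
  simp only [RelIso.coe_fn_toEquiv, e.map_rel_iff, e.dist_eq]
  rfl

lemma Iso.MMD_iff (e : G ≃g G') : MMD G' (e u) (e v) ↔ MMD G u v := by
  simp only [MMD, e.maxDistFrom_iff, ne_eq, EmbeddingLike.apply_eq_iff_eq]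

lemma Iso.ncard_Mset (e : G ≃g G') : (Mset G').ncard = (Mset G).ncard := by
  have : Mset G' = e '' Mset G := by
    ext x
    obtain ⟨y, rfl⟩ := e.surjective x
    rw [e.injective.mem_set_image, Mset, Mset, Set.mem_ofPred_eq, Set.mem_ofPred_eq,
      ← e.toEquiv.exists_congr_right]
    simp only [RelIso.coe_fn_toEquiv, e.MMD_iff]
  rw [this, Set.ncard_image_of_injective _ e.injective]

lemma Iso.isSRSet_preimage_iff (e : G ≃g G') [Finite V] (hG : G.Connected) {S : Set W} :
    IsSRSet G (e ⁻¹' S) ↔ IsSRSet G' S := by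
  have : Finite W := .of_equiv V e.toEquiv
  rw [isSRSet_iff_forall_MMD hG, isSRSet_iff_forall_MMD (e.connected_iff.mp hG),
    ← e.toEquiv.forall_congr_right]
  refine forall_congr' fun u => ?_
  rw [← e.toEquiv.forall_congr_right]
  simp only [RelIso.coe_fn_toEquiv, e.MMD_iff, Set.mem_preimage]

lemma Iso.isSRF_comp_iff (e : G ≃g G') [Finite V] (hG : G.Connected) {g : W → ℝ} :
    IsSRF G (g ∘ e) ↔ IsSRF G' g := by
  have : Finite W := .of_equiv V e.toEquiv
  rw [isSRF_iff_forall_MMD hG, isSRF_iff_forall_MMD (e.connected_iff.mp hG),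
    ← e.toEquiv.forall_congr_right (q := fun v => 0 ≤ g v ∧ g v ≤ 1)]
  refine and_congr Iff.rfl ?_
  rw [← e.toEquiv.forall_congr_right]
  refine forall_congr' fun u => ?_
  rw [← e.toEquiv.forall_congr_right]
  simp only [RelIso.coe_fn_toEquiv, e.MMD_iff, Function.comp_apply]

lemma Iso.sdim_eq (e : G ≃g G') [Finite V] (hG : G.Connected) : sdim G' = sdim G := by
  unfold sdim
  congr 1
  ext n
  constructor
  · rintro ⟨S, hS, rfl⟩
    exact ⟨e ⁻¹' S, (e.isSRSet_preimage_iff hG).mpr hS,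
      Set.ncard_preimage_of_injective_subset_range e.injective (by simp)⟩
  · rintro ⟨S, hS, rfl⟩
    refine ⟨e.symm ⁻¹' S, (e.isSRSet_preimage_iff hG).mp ?_,
      Set.ncard_preimage_of_injective_subset_range e.symm.injective (by simp)⟩
    simpa [Set.preimage_preimage] using hS

lemma Iso.sdimf_eq (e : G ≃g G') [Finite V] (hG : G.Connected) : sdimf G' = sdimf G := by
  unfold sdimf
  congr 1
  ext s
  constructor
  · rintro ⟨g, hg, rfl⟩
    exact ⟨g ∘ e, (e.isSRF_comp_iff hG).mpr hg, (finsum_comp_equiv e.toEquiv).symm⟩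
  · rintro ⟨g, hg, rfl⟩
    refine ⟨g ∘ e.symm, (e.isSRF_comp_iff hG).mp ?_, (finsum_comp_equiv e.symm.toEquiv).symm⟩
    simpa [Function.comp_def] using hg

end SimpleGraph

end StrongResolving

def IsFractionalVertexCover {U : Type*} (H : SimpleGraph U) (f : U → ℝ) : Prop :=
  (∀ u, 0 ≤ f u ∧ f u ≤ 1) ∧ ∀ ⦃u v⦄, H.Adj u v → 1 ≤ f u + f v

lemma SimpleGraph.IsVertexCover.card_sub_one_le_ncard_of_top {α : Type*} [Finite α] {T : Set α}
    (hT : (⊤ : SimpleGraph α).IsVertexCover T) : Nat.card α - 1 ≤ T.ncard := by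
  have : Tᶜ.ncard ≤ 1 := (Set.ncard_le_one_iff).mpr fun {i j} hi hj => by
    by_contra hij
    exact (hT ((top_adj i j).mpr hij)).elim hi hj
  have := Set.ncard_add_ncard_compl T
  omega

lemma IsFractionalVertexCover.half_le_sum_of_top {n : ℕ} (hn : 2 ≤ n) {f : Fin n → ℝ}
    (hf : IsFractionalVertexCover ⊤ f) : (n : ℝ) / 2 ≤ ∑ i, f i := by
  have hrot : ∀ i, finRotate n i ≠ i := fun i =>
    Equiv.Perm.mem_support.mp (support_finRotate_of_le hn ▸ Finset.mem_univ i)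
  have := Finset.sum_le_sum fun i (_ : i ∈ Finset.univ) => hf.2 ((top_adj _ _).mpr (hrot i))
  rw [Finset.sum_add_distrib, Equiv.sum_comp] at this
  simp only [Finset.sum_const, Finset.card_univ, Fintype.card_fin, nsmul_eq_mul, mul_one] at this
  linarith

section Cone

variable {U : Type*} (H : SimpleGraph U) {u v : U}

lemma cone_adj_none_some : (cone H).Adj none (some u) := trivial

lemma cone_connected : (cone H).Connected := by
  have hnone : ∀ x, (cone H).Reachable none x := by
    rintro (_ | u)
    · rfl
    · exact (cone_adj_none_some H).reachable
  exact @Connected.mk _ _ (fun x y => (hnone x).symm.trans (hnone y)) ⟨none⟩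

lemma dist_cone_le_two (x y : Option U) : (cone H).dist x y ≤ 2 := by
  have hnone : ∀ x, (cone H).dist none x ≤ 1 := by
    rintro (_ | u)
    · simp
    · exact (dist_eq_one_iff_adj.mpr (cone_adj_none_some H)).le
  calc (cone H).dist x y ≤ (cone H).dist x none + (cone H).dist none y :=
        (cone_connected H).dist_triangle
    _ ≤ 2 := by rw [SimpleGraph.dist_comm]; linarith [hnone x, hnone y]

lemma cone_compl_adj_some : (cone Hᶜ).Adj (some u) (some v) ↔ u ≠ v ∧ ¬H.Adj u v :=
  compl_adj H u v

lemma dist_cone_compl_of_adj (h : H.Adj u v) : (cone Hᶜ).dist (some u) (some v) = 2 := by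
  refine le_antisymm (dist_cone_le_two _ _ _) ?_
  refine (cone_connected _).one_lt_dist_of_ne_of_not_adj (by simpa using h.ne) ?_
  rw [cone_compl_adj_some]
  tauto

lemma MMD_cone_compl_of_adj (h : H.Adj u v) : MMD (cone Hᶜ) (some u) (some v) :=
  ⟨by simpa using h.ne,
    fun w _ => (dist_cone_compl_of_adj H h).symm ▸ dist_cone_le_two _ _ _,
    fun w _ => (dist_cone_compl_of_adj H h.symm).symm ▸ dist_cone_le_two _ _ _⟩

lemma not_MMD_cone_compl_none (hiso : ∀ u, ∃ w, H.Adj u w) (x : Option U) :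
    ¬MMD (cone Hᶜ) none x := by
  rintro ⟨hne, hnone, -⟩
  rcases x with _ | v
  · exact hne rfl
  obtain ⟨w, hvw⟩ := hiso v
  have := hnone (some w) (cone_adj_none_some _)
  rw [dist_cone_compl_of_adj H hvw.symm, dist_eq_one_iff_adj.mpr (cone_adj_none_some _)] at this
  omega

/-- An `H`-neighbour of `v` lies at distance `2` from `some v`, so it cannot be an
`Hᶜ`-neighbour of `u`. -/
lemma MaxDistFrom.neighborSet_subset_of_cone_compl (h : MaxDistFrom (cone Hᶜ) (some u) (some v))
    (huv : ¬H.Adj u v) : H.neighborSet v ⊆ H.neighborSet u := by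
  intro w hvw
  by_contra huw
  rcases eq_or_ne u v with rfl | hne
  · exact huw hvw
  have hwu : w ≠ u := by rintro rfl; exact huv hvw.symm
  have := h (some w) ((cone_compl_adj_some H).mpr ⟨hwu.symm, huw⟩)
  rw [dist_cone_compl_of_adj H hvw.symm,
    dist_eq_one_iff_adj.mpr ((cone_compl_adj_some H).mpr ⟨hne, huv⟩)] at this
  omega

lemma adj_of_MMD_cone_compl (htwin : ∀ u, ¬HasFalseTwin H u)
    (h : MMD (cone Hᶜ) (some u) (some v)) : H.Adj u v := by
  by_contra huv
  refine htwin u ⟨v, fun hvu => h.1 (by rw [hvu]), ?_⟩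
  exact (h.2.1.neighborSet_subset_of_cone_compl H huv).antisymm
    (h.2.2.neighborSet_subset_of_cone_compl H fun h' => huv h'.symm)

end Cone

section ConeCompl

variable {U : Type*} {H : SimpleGraph U}

lemma Mset_cone_compl (hiso : ∀ u, ∃ w, H.Adj u w) : Mset (cone Hᶜ) = Set.range some := by
  ext x
  constructor
  · rintro ⟨y, hxy⟩
    rcases x with _ | u
    · exact absurd hxy (not_MMD_cone_compl_none H hiso y)
    · exact ⟨u, rfl⟩
  · rintro ⟨u, rfl⟩
    obtain ⟨w, huw⟩ := hiso u
    exact ⟨some w, MMD_cone_compl_of_adj H huw⟩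

lemma ncard_Mset_cone_compl [Finite U] (hiso : ∀ u, ∃ w, H.Adj u w) :
    (Mset (cone Hᶜ)).ncard = Nat.card U := by
  rw [Mset_cone_compl hiso, ← Set.image_univ,
    Set.ncard_image_of_injective _ (Option.some_injective _), Set.ncard_univ]

variable [Finite U] (hiso : ∀ u, ∃ w, H.Adj u w) (htwin : ∀ u, ¬HasFalseTwin H u)
include hiso htwin

lemma isSRSet_cone_compl_iff {S : Set (Option U)} :
    IsSRSet (cone Hᶜ) S ↔ H.IsVertexCover (some ⁻¹' S) := by
  rw [isSRSet_iff_forall_MMD (cone_connected _)]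
  constructor
  · exact fun h u v huv => h _ _ (MMD_cone_compl_of_adj H huv)
  · rintro h (_ | u) (_ | v) huv
    · exact absurd huv (not_MMD_cone_compl_none H hiso _)
    · exact absurd huv (not_MMD_cone_compl_none H hiso _)
    · exact absurd huv.symm (not_MMD_cone_compl_none H hiso _)
    · exact h (adj_of_MMD_cone_compl H htwin huv)

lemma isSRF_cone_compl_iff {g : Option U → ℝ} :
    IsSRF (cone Hᶜ) g ↔ (0 ≤ g none ∧ g none ≤ 1) ∧ IsFractionalVertexCover H (g ∘ some) := by
  rw [isSRF_iff_forall_MMD (cone_connected _), Option.forall, and_assoc]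
  refine and_congr_right fun _ => and_congr_right fun _ => ⟨?_, ?_⟩
  · exact fun h u v huv => h _ _ (MMD_cone_compl_of_adj H huv)
  · rintro h (_ | u) (_ | v) huv
    · exact absurd huv (not_MMD_cone_compl_none H hiso _)
    · exact absurd huv (not_MMD_cone_compl_none H hiso _)
    · exact absurd huv.symm (not_MMD_cone_compl_none H hiso _)
    · exact h (adj_of_MMD_cone_compl H htwin huv)

theorem sdim_cone_compl_eq {n : ℕ}
    (hn : IsLeast {n | ∃ T, H.IsVertexCover T ∧ T.ncard = n} n) : sdim (cone Hᶜ) = n := by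
  refine IsLeast.csInf_eq ⟨?_, ?_⟩
  · obtain ⟨T, hT, rfl⟩ := hn.1
    refine ⟨some '' T, (isSRSet_cone_compl_iff hiso htwin).mpr ?_,
      Set.ncard_image_of_injective _ (Option.some_injective _)⟩
    rwa [Set.preimage_image_eq _ (Option.some_injective _)]
  · rintro _ ⟨S, hS, rfl⟩
    calc n ≤ (some ⁻¹' S).ncard := hn.2 ⟨_, (isSRSet_cone_compl_iff hiso htwin).mp hS, rfl⟩
      _ = (some '' (some ⁻¹' S)).ncard :=
        (Set.ncard_image_of_injective _ (Option.some_injective _)).symm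
      _ ≤ S.ncard := Set.ncard_le_ncard (Set.image_preimage_subset _ _)

theorem sdimf_cone_compl_eq {s : ℝ}
    (hs : IsLeast {s | ∃ f, IsFractionalVertexCover H f ∧ s = ∑ᶠ u, f u} s) :
    sdimf (cone Hᶜ) = s := by
  have := Fintype.ofFinite U
  have hsum : ∀ g : Option U → ℝ, ∑ᶠ x, g x = g none + ∑ᶠ u, g (some u) := by
    simp only [finsum_eq_sum_of_fintype, Fintype.sum_option, implies_true]
  refine IsLeast.csInf_eq ⟨?_, ?_⟩
  · obtain ⟨f, hf, rfl⟩ := hs.1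
    refine ⟨fun x => x.elim 0 f,
      (isSRF_cone_compl_iff hiso htwin).mpr ⟨⟨le_rfl, zero_le_one⟩, hf⟩, ?_⟩
    simp [hsum]
  · rintro _ ⟨g, hg, rfl⟩
    obtain ⟨⟨hnone, -⟩, hf⟩ := (isSRF_cone_compl_iff hiso htwin).mp hg
    have := hs.2 ⟨_, hf, rfl⟩
    simp only [Function.comp_apply] at this
    rw [hsum]
    linarith

end ConeCompl

open Sum

/-- The clique `K_a` on `Fin a` beside a graph on three copies `C, S, P` of `Fin c`: the vertex
`j ∈ C` is adjacent to `j ∈ S` and to every `m ∈ P` with `m ≠ j`. -/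
def cliqueCrown (a c : ℕ) : SimpleGraph (Fin a ⊕ Fin c ⊕ Fin c ⊕ Fin c) where
  Adj x y :=
    match x, y with
    | inl i, inl i' => i ≠ i'
    | inr (inl j), inr (inr (inl m)) => j = m
    | inr (inr (inl m)), inr (inl j) => j = m
    | inr (inl j), inr (inr (inr m)) => j ≠ m
    | inr (inr (inr m)), inr (inl j) => j ≠ m
    | _, _ => False
  symm := by
    constructor
    rintro (i | j | m | m) (i' | j' | m' | m') h <;> first | exact h.elim | exact Ne.symm h | exact h
  loopless := by
    constructor
    rintro (i | j | m | m) h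
    · exact h rfl
    all_goals exact h

section CliqueCrown

variable {a c : ℕ}

lemma cliqueCrown_exists_adj (ha : 2 ≤ a) (hc : 2 ≤ c) (u) : ∃ w, (cliqueCrown a c).Adj u w := by
  have : Nontrivial (Fin a) := Fin.nontrivial_iff_two_le.mpr ha
  have : Nontrivial (Fin c) := Fin.nontrivial_iff_two_le.mpr hc
  rcases u with i | j | m | m
  · obtain ⟨i', hi'⟩ := exists_ne i
    exact ⟨inl i', hi'.symm⟩
  · exact ⟨inr (inr (inl j)), rfl⟩
  · exact ⟨inr (inl m), rfl⟩
  · obtain ⟨j, hj⟩ := exists_ne m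
    exact ⟨inr (inl j), hj⟩

lemma cliqueCrown_not_hasFalseTwin (ha : 2 ≤ a) (hc : 3 ≤ c) (u) :
    ¬HasFalseTwin (cliqueCrown a c) u := by
  have : Nontrivial (Fin a) := Fin.nontrivial_iff_two_le.mpr ha
  rintro ⟨v, hvu, hN⟩
  revert hN
  rcases u with i | j | m | m
  · rcases v with i' | v
    · exact neighborSet_ne_of_adj_of_not_adj (w := inl i') (fun h => hvu (congrArg inl h).symm)
        (fun h => h rfl)
    · obtain ⟨i', hi'⟩ := exists_ne i
      exact neighborSet_ne_of_adj_of_not_adj (w := inl i') hi'.symm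
        (by rcases v with _ | _ | _ <;> exact id)
  · refine neighborSet_ne_of_adj_of_not_adj (w := inr (inr (inl j))) rfl ?_
    rcases v with _ | j' | _ | _
    · exact id
    · exact fun h => hvu (congrArg (inr ∘ inl) h)
    · exact id
    · exact id
  · rcases v with i | j | m' | m'
    · exact neighborSet_ne_of_adj_of_not_adj (w := inr (inl m)) rfl id
    · exact neighborSet_ne_of_adj_of_not_adj (w := inr (inl m)) rfl id
    · exact neighborSet_ne_of_adj_of_not_adj (w := inr (inl m)) rfl
        fun (h : m = m') => hvu (congrArg (inr ∘ inr ∘ inl) h.symm)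
    · rcases eq_or_ne m' m with rfl | hm
      · exact neighborSet_ne_of_adj_of_not_adj (w := inr (inl m')) rfl fun h => h rfl
      · obtain ⟨j, hjm', hjm⟩ := Fin.exists_ne_and_ne_of_two_lt m' m hc
        exact (neighborSet_ne_of_adj_of_not_adj (w := inr (inl j)) hjm' hjm).symm
  · obtain ⟨j, hjm⟩ := Fin.exists_ne_and_ne_of_two_lt m m hc
    rcases v with i | j' | m' | m'
    · exact neighborSet_ne_of_adj_of_not_adj (w := inr (inl j)) hjm.1 id
    · exact neighborSet_ne_of_adj_of_not_adj (w := inr (inl j)) hjm.1 id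
    · obtain ⟨j, hjm, hjm'⟩ := Fin.exists_ne_and_ne_of_two_lt m m' hc
      exact neighborSet_ne_of_adj_of_not_adj (w := inr (inl j)) hjm hjm'
    · have hm : m ≠ m' := fun h => hvu (congrArg (inr ∘ inr ∘ inr) h.symm)
      exact neighborSet_ne_of_adj_of_not_adj (w := inr (inl m')) hm.symm fun h => h rfl

lemma cliqueCrown_adj_cases {u v} (h : (cliqueCrown a c).Adj u v) :
    (∃ i i', u = inl i ∧ v = inl i') ∨ ∃ j, u = inr (inl j) ∨ v = inr (inl j) := by
  rcases u with i | j | m | m <;> rcases v with i' | j' | m' | m' <;>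
    first
      | exact h.elim
      | exact Or.inl ⟨_, _, rfl, rfl⟩
      | exact Or.inr ⟨_, Or.inl rfl⟩
      | exact Or.inr ⟨_, Or.inr rfl⟩

lemma le_ncard_of_isVertexCover_cliqueCrown {T : Set (Fin a ⊕ Fin c ⊕ Fin c ⊕ Fin c)}
    (hT : (cliqueCrown a c).IsVertexCover T) : a - 1 + c ≤ T.ncard := by
  have hA : a - 1 ≤ (inl ⁻¹' T).ncard := by
    simpa using IsVertexCover.card_sub_one_le_ncard_of_top (T := inl ⁻¹' T)
      fun i i' h => hT (show (cliqueCrown a c).Adj (inl i) (inl i') from h)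
  have hCS : (inl ⁻¹' (inr ⁻¹' T))ᶜ ⊆ inl ⁻¹' (inr ⁻¹' (inr ⁻¹' T)) := fun j hj =>
    (hT (show (cliqueCrown a c).Adj (inr (inl j)) (inr (inr (inl j))) from rfl)).resolve_left hj
  have hC : (inl ⁻¹' (inr ⁻¹' T)).ncard + (inl ⁻¹' (inr ⁻¹' T))ᶜ.ncard = c := by
    simpa using Set.ncard_add_ncard_compl (inl ⁻¹' (inr ⁻¹' T))
  have := Set.ncard_le_ncard hCS
  rw [T.ncard_eq_ncard_preimage_inl_add, (inr ⁻¹' T).ncard_eq_ncard_preimage_inl_add,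
    (inr ⁻¹' (inr ⁻¹' T)).ncard_eq_ncard_preimage_inl_add]
  omega

lemma isLeast_ncard_vertexCover_cliqueCrown (ha : 1 ≤ a) :
    IsLeast {n | ∃ T, (cliqueCrown a c).IsVertexCover T ∧ T.ncard = n} (a - 1 + c) := by
  refine ⟨⟨inl '' {⟨0, ha⟩}ᶜ ∪ Set.range (inr ∘ inl), fun u v h => ?_, ?_⟩,
    fun _ ⟨T, hT, hn⟩ => hn ▸ le_ncard_of_isVertexCover_cliqueCrown hT⟩
  · rcases cliqueCrown_adj_cases h with ⟨i, i', rfl, rfl⟩ | ⟨j, rfl | rfl⟩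
    · by_cases hi : i = ⟨0, ha⟩
      · exact Or.inr (Or.inl ⟨i', fun h' => h (hi.trans h'.symm), rfl⟩)
      · exact Or.inl (Or.inl ⟨i, hi, rfl⟩)
    · exact Or.inl (Or.inr ⟨j, rfl⟩)
    · exact Or.inr (Or.inr ⟨j, rfl⟩)
  · rw [Set.ncard_union_eq, Set.ncard_image_of_injective _ inl_injective, Set.ncard_compl,
      Set.ncard_singleton, Set.ncard_range_of_injective (inr_injective.comp inl_injective)]
    · simp
    · rw [Set.disjoint_left]
      rintro _ ⟨i, -, rfl⟩ ⟨j, hj⟩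
      exact inr_ne_inl hj

lemma le_sum_of_isFractionalVertexCover_cliqueCrown (ha : 2 ≤ a)
    {f : Fin a ⊕ Fin c ⊕ Fin c ⊕ Fin c → ℝ} (hf : IsFractionalVertexCover (cliqueCrown a c) f) :
    (a : ℝ) / 2 + c ≤ ∑ᶠ u, f u := by
  have hA := IsFractionalVertexCover.half_le_sum_of_top ha (f := f ∘ inl)
    ⟨fun i => hf.1 _, fun i i' h => hf.2 (show (cliqueCrown a c).Adj (inl i) (inl i') from h)⟩
  have hCS : (c : ℝ) ≤ ∑ j, (f (inr (inl j)) + f (inr (inr (inl j)))) := by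
    simpa using Finset.sum_le_sum fun j (_ : j ∈ Finset.univ) =>
      hf.2 (show (cliqueCrown a c).Adj (inr (inl j)) (inr (inr (inl j))) from rfl)
  have hP : 0 ≤ ∑ m, f (inr (inr (inr m))) := Finset.sum_nonneg fun m _ => (hf.1 _).1
  rw [finsum_eq_sum_of_fintype, Fintype.sum_sum_type, Fintype.sum_sum_type,
    Fintype.sum_sum_type]
  rw [Finset.sum_add_distrib] at hCS
  simp only [Function.comp_apply] at hA
  linarith

lemma isLeast_sum_fractionalVertexCover_cliqueCrown (ha : 2 ≤ a) :
    IsLeast {s | ∃ f, IsFractionalVertexCover (cliqueCrown a c) f ∧ s = ∑ᶠ u, f u}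
      ((a : ℝ) / 2 + c) := by
  refine ⟨⟨Sum.elim (fun _ => 1 / 2) (Sum.elim (fun _ => 1) 0), ⟨?_, fun u v h => ?_⟩, ?_⟩,
    fun _ ⟨f, hf, hs⟩ => hs ▸ le_sum_of_isFractionalVertexCover_cliqueCrown ha hf⟩
  · rintro (_ | _ | _ | _) <;> norm_num
  · rcases cliqueCrown_adj_cases h with ⟨i, i', rfl, rfl⟩ | ⟨j, rfl | rfl⟩
    · norm_num
    · rcases v with _ | _ | _ | _ <;> norm_num
    · rcases u with _ | _ | _ | _ <;> norm_num
  · simp only [finsum_eq_sum_of_fintype, Fintype.sum_sum_type, elim_inl, elim_inr,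
      Finset.sum_const, Finset.card_univ, Fintype.card_fin, nsmul_eq_mul, Pi.zero_apply]
    ring

end CliqueCrown

theorem exists_graph_min_sub_sdimf_eq_general (k : ℕ) :
    ∃ (n : ℕ) (G : SimpleGraph (Fin n)), G.Connected ∧
      min (((Mset G).ncard : ℝ) / 2) (sdim G : ℝ) - sdimf G = (k : ℝ) := by
  have hiso := cliqueCrown_exists_adj (a := 2 * k + 2) (c := 2 * k + 3) (by omega) (by omega)
  have htwin := cliqueCrown_not_hasFalseTwin (a := 2 * k + 2) (c := 2 * k + 3) (by omega) (by omega)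
  have hconn := cone_connected (cliqueCrown (2 * k + 2) (2 * k + 3))ᶜ
  let e := (cone (cliqueCrown (2 * k + 2) (2 * k + 3))ᶜ).overFinIso rfl
  refine ⟨_, _, e.connected_iff.mp hconn, ?_⟩
  rw [e.ncard_Mset, e.sdim_eq hconn, e.sdimf_eq hconn, ncard_Mset_cone_compl hiso,
    sdim_cone_compl_eq hiso htwin (isLeast_ncard_vertexCover_cliqueCrown (by omega)),
    sdimf_cone_compl_eq hiso htwin (isLeast_sum_fractionalVertexCover_cliqueCrown (by omega))]
  simp only [Nat.card_eq_fintype_card, Fintype.card_sum, Fintype.card_fin, Nat.add_one_sub_one]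
  push_cast
  rw [min_eq_right (by linarith)]
  ring

/-- For every positive integer `k` there is a finite connected graph `G`
such that `min{ |M(G)|/2, sdim(G) } − sdim_f(G) = k`. -/
theorem exists_graph_min_sub_sdimf_eq (k : ℕ) (hk : 0 < k) :
    ∃ (n : ℕ) (G : SimpleGraph (Fin n)), G.Connected ∧
      min (((Mset G).ncard : ℝ) / 2) (sdim G : ℝ) - sdimf G = (k : ℝ) :=
  exists_graph_min_sub_sdimf_eq_general k
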